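/- Let g ≥ 2 and b > 1 be integers with gcd(b,g) = 1, let a be a positive integer with gcd(a,b) = 1 and a < b^k, let t ≥ 1, and let k ≥ c_g(b). Then for every i with 0 ≤ i < ord_g(b^k) and every m ∈ {0,…,b^t−1} there is a unique n ∈ {0,…,b^t−1} such that (a·g^{i + m·ord_g(b^k)}) mod b^{k+t} = ((a·g^i) mod b^k) + n·b^k; moreover, for each fixed i, the resulting map m ↦ n is a bijection of {0,…,b^t−1} onto itself. -/

import Mathlib

/-- `ordg g m = min {n ≥ 1 : g^n ≡ 1 (mod m)}`, the multiplicative order of `g` modulo `m`. -/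
noncomputable def ordg (g m : ℕ) : ℕ := sInf {n : ℕ | 0 < n ∧ g ^ n ≡ 1 [MOD m]}

/-- `cg g b` is the least `c ≥ 1` such that `ord_g(b^{c+t}) = b^t·ord_g(b^c)` for all `t ≥ 1`. -/
noncomputable def cg (g b : ℕ) : ℕ :=
  sInf {c : ℕ | 0 < c ∧ ∀ t : ℕ, 0 < t → ordg g (b ^ (c + t)) = b ^ t * ordg g (b ^ c)}

/-!
Write `d n = ord_g(b^n)` and `x = g^(d 2)`. Since `b^2 ∣ x - 1`, lifting the exponent gives
`v_p(x^s - 1) = v_p((x - 1) s)` at every prime `p ∣ b`, so `b^n ∣ x^s - 1 ↔ b^n ∣ (x - 1) s`, and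
hence `d n = d 2 · b^n / gcd(b^n, x - 1)` for `n ≥ 2`. Once `n ≥ x - 1` the gcd no longer changes,
so `d (n + 1) = b · d n` from then on; this makes `c_g(b)` meaningful and gives
`ord_g(b^(k+t)) = b^t · ord_g(b^k)` for `k ≥ c_g(b)`.

For the theorem, `a g^(i + m d k) ≡ a g^i (mod b^k)`, so modulo `b^(k+t)` this number is
`(a g^i mod b^k) + n b^k` where `n` is its base-`b^k` digit reduced mod `b^t`. Because `g` has
order `b^t · d k` modulo `b^(k+t)`, the map `m ↦ n` is injective on `{0, …, b^t - 1}`, hence a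
bijection of that set.
-/

section Order

variable {g M : ℕ}

theorem ordg_eq_of_forall_iff {D : ℕ} (h : ∀ m, g ^ m ≡ 1 [MOD M] ↔ D ∣ m) : ordg g M = D := by
  have hset : {n : ℕ | 0 < n ∧ g ^ n ≡ 1 [MOD M]} = {n | 0 < n ∧ D ∣ n} := by
    simp only [h]
  rw [ordg, hset]
  rcases Nat.eq_zero_or_pos D with rfl | hD
  · simp [Nat.pos_iff_ne_zero]
  · exact le_antisymm (Nat.sInf_le ⟨hD, dvd_rfl⟩)
      (le_csInf ⟨D, hD, dvd_rfl⟩ fun n hn => Nat.le_of_dvd hn.1 hn.2)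

theorem pow_modEq_one_iff_orderOf_dvd {m : ℕ} :
    g ^ m ≡ 1 [MOD M] ↔ orderOf (g : ZMod M) ∣ m := by
  rw [orderOf_dvd_iff_pow_eq_one, ← ZMod.natCast_eq_natCast_iff, Nat.cast_pow, Nat.cast_one]

theorem ordg_eq_orderOf (g M : ℕ) : ordg g M = orderOf (g : ZMod M) :=
  ordg_eq_of_forall_iff fun _ => pow_modEq_one_iff_orderOf_dvd

theorem pow_modEq_one_iff_ordg_dvd {m : ℕ} : g ^ m ≡ 1 [MOD M] ↔ ordg g M ∣ m :=
  ordg_eq_orderOf g M ▸ pow_modEq_one_iff_orderOf_dvd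

theorem pow_ordg_modEq_one : g ^ ordg g M ≡ 1 [MOD M] :=
  pow_modEq_one_iff_ordg_dvd.2 dvd_rfl

theorem mul_pow_add_mul_ordg_modEq (a i m : ℕ) :
    a * g ^ (i + m * ordg g M) ≡ a * g ^ i [MOD M] := by
  have h := ((pow_ordg_modEq_one (g := g) (M := M)).pow m).mul_left (a * g ^ i)
  rwa [one_pow, mul_one, mul_assoc, ← pow_mul, ← pow_add, mul_comm (ordg g M)] at h

theorem isOfFinOrder_natCast_of_coprime (hM : M ≠ 0) (hg : g.Coprime M) :
    IsOfFinOrder (g : ZMod M) :=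
  haveI : NeZero M := ⟨hM⟩
  ((ZMod.isUnit_iff_coprime g M).2 hg).isOfFinOrder

theorem ordg_pos (hM : M ≠ 0) (hg : g.Coprime M) : 0 < ordg g M := by
  rw [ordg_eq_orderOf]
  exact (isOfFinOrder_natCast_of_coprime hM hg).orderOf_pos

theorem pow_modEq_pow_iff (hM : M ≠ 0) (hg : g.Coprime M) {x y : ℕ} :
    g ^ x ≡ g ^ y [MOD M] ↔ x ≡ y [MOD ordg g M] := by
  rw [← ZMod.natCast_eq_natCast_iff, ordg_eq_orderOf]
  push_cast
  exact (isOfFinOrder_natCast_of_coprime hM hg).pow_eq_pow_iff_modEq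

end Order

theorem emultiplicity_pow_sub_one {p x : ℕ} (hp : p.Prime) (hx : 0 < x) (hpx : p ∣ x - 1)
    (h4 : p = 2 → 4 ∣ x - 1) (s : ℕ) :
    emultiplicity p (x ^ s - 1) = emultiplicity p ((x - 1) * s) := by
  have hpx_ndvd : ¬ p ∣ x := fun h => hp.one_lt.ne'
    (Nat.dvd_one.mp (by simpa [Nat.sub_sub_self hx] using Nat.dvd_sub h hpx))
  rw [emultiplicity_mul hp.prime]
  rcases hp.eq_two_or_odd' with rfl | hodd
  · rw [← Int.natCast_emultiplicity, ← Int.natCast_emultiplicity, ← Int.natCast_emultiplicity]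
    have h4' := Int.natCast_dvd_natCast.2 (h4 rfl)
    push_cast [Nat.cast_sub hx] at h4'
    rw [Nat.cast_sub (Nat.one_le_pow _ _ hx), Nat.cast_sub hx]
    simpa using Int.two_pow_sub_pow' s h4' (by exact_mod_cast hpx_ndvd)
  · simpa using Nat.emultiplicity_pow_sub_pow hp hodd (y := 1) hpx hpx_ndvd s

theorem dvd_iff_dvd_of_emultiplicity_eq {m X Y : ℕ}
    (h : ∀ p, p.Prime → p ∣ m → emultiplicity p X = emultiplicity p Y) : m ∣ X ↔ m ∣ Y := by
  rw [Nat.dvd_iff_prime_pow_dvd_dvd X, Nat.dvd_iff_prime_pow_dvd_dvd Y]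
  refine forall₂_congr fun p k => imp_congr_right fun hp => imp_congr_right fun hpk => ?_
  rcases Nat.eq_zero_or_pos k with rfl | hk
  · simp
  · rw [pow_dvd_iff_le_emultiplicity, pow_dvd_iff_le_emultiplicity,
      h p hp ((dvd_pow_self p hk.ne').trans hpk)]

theorem pow_dvd_pow_sub_one_iff {b x : ℕ} (hx : 0 < x) (hb : b ^ 2 ∣ x - 1) (n s : ℕ) :
    b ^ n ∣ x ^ s - 1 ↔ b ^ n ∣ (x - 1) * s :=
  dvd_iff_dvd_of_emultiplicity_eq fun p hp hpb => by
    have hpb : p ∣ b := hp.dvd_of_dvd_pow hpb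
    refine emultiplicity_pow_sub_one hp hx ((dvd_pow hpb two_ne_zero).trans hb) ?_ s
    rintro rfl
    exact (pow_dvd_pow_of_dvd hpb 2).trans hb

theorem dvd_mul_iff_div_gcd_dvd {a b c : ℕ} (ha : 0 < a) : a ∣ b * c ↔ a / a.gcd b ∣ c := by
  have hpos := Nat.gcd_pos_of_pos_left b ha
  have hcop := Nat.coprime_div_gcd_div_gcd hpos
  obtain ⟨a', ha'⟩ := Nat.gcd_dvd_left a b
  obtain ⟨b', hb'⟩ := Nat.gcd_dvd_right a b
  generalize a.gcd b = h at *
  subst ha' hb'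
  rw [Nat.mul_div_cancel_left _ hpos, Nat.mul_div_cancel_left _ hpos] at hcop
  rw [Nat.mul_div_cancel_left _ hpos, mul_assoc, Nat.mul_dvd_mul_iff_left hpos, hcop.dvd_mul_left]

theorem gcd_pow_succ_eq_gcd_pow {b X n : ℕ} (hb : b ≠ 0) (hX : X ≠ 0) (hn : X ≤ n) :
    (b ^ (n + 1)).gcd X = (b ^ n).gcd X := by
  apply Nat.eq_of_factorization_eq (Nat.gcd_ne_zero_right hX) (Nat.gcd_ne_zero_right hX)
  intro p
  rw [Nat.factorization_gcd (pow_ne_zero _ hb) hX, Nat.factorization_gcd (pow_ne_zero _ hb) hX]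
  simp only [Nat.factorization_pow, Finsupp.inf_apply, Finsupp.smul_apply, smul_eq_mul]
  have := Nat.factorization_lt p hX
  rcases Nat.eq_zero_or_pos (b.factorization p) with h | h
  · simp [h]
  · rw [min_eq_right (by nlinarith), min_eq_right (by nlinarith)]

section Growth

variable {g b : ℕ}

theorem ordg_pow_eq_mul_div_gcd (hg : 0 < g) (hb : b ≠ 0) {n : ℕ} (hn : 2 ≤ n) :
    ordg g (b ^ n) = ordg g (b ^ 2) * (b ^ n / (b ^ n).gcd (g ^ ordg g (b ^ 2) - 1)) := by
  set x := g ^ ordg g (b ^ 2)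
  have hx : 0 < x := pow_pos hg _
  have key : ∀ s, g ^ (ordg g (b ^ 2) * s) ≡ 1 [MOD b ^ n] ↔
      b ^ n / (b ^ n).gcd (x - 1) ∣ s := fun s => by
    rw [pow_mul, Nat.ModEq.comm, Nat.modEq_iff_dvd' (Nat.one_le_pow _ _ hx),
      pow_dvd_pow_sub_one_iff hx ((Nat.modEq_iff_dvd' hx).1 pow_ordg_modEq_one.symm),
      dvd_mul_iff_div_gcd_dvd (pow_pos (Nat.pos_of_ne_zero hb) n)]
  refine ordg_eq_of_forall_iff fun m => ⟨fun h => ?_, ?_⟩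
  · obtain ⟨s, rfl⟩ := pow_modEq_one_iff_ordg_dvd.1 (h.of_dvd (pow_dvd_pow b hn))
    exact mul_dvd_mul_left _ ((key s).1 h)
  · rintro ⟨s, rfl⟩
    rw [mul_assoc]
    exact (key _).2 (dvd_mul_right _ _)

theorem exists_ordg_pow_succ_eq (hg : 2 ≤ g) (hb : b ≠ 0) (hgb : g.Coprime b) :
    ∃ N, ∀ n ≥ N, ordg g (b ^ (n + 1)) = b * ordg g (b ^ n) := by
  set x := g ^ ordg g (b ^ 2)
  have hx : 2 ≤ x :=
    hg.trans (Nat.le_self_pow (ordg_pos (pow_ne_zero 2 hb) (hgb.pow_right 2)).ne' g)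
  refine ⟨max 2 (x - 1), fun n hn => ?_⟩
  rw [ordg_pow_eq_mul_div_gcd (by omega) hb (by omega),
    ordg_pow_eq_mul_div_gcd (by omega) hb (le_of_max_le_left hn),
    gcd_pow_succ_eq_gcd_pow hb (by omega) (le_of_max_le_right hn), pow_succ' b n,
    Nat.mul_div_assoc _ (Nat.gcd_dvd_left _ _), mul_left_comm]

theorem cg_spec (hg : 2 ≤ g) (hb : b ≠ 0) (hgb : g.Coprime b) :
    0 < cg g b ∧ ∀ t, 0 < t → ordg g (b ^ (cg g b + t)) = b ^ t * ordg g (b ^ cg g b) := by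
  obtain ⟨N, hN⟩ := exists_ordg_pow_succ_eq hg hb hgb
  have hpow : ∀ t, ordg g (b ^ (N + 1 + t)) = b ^ t * ordg g (b ^ (N + 1)) := fun t => by
    induction t with
    | zero => simp
    | succ t ih => rw [← add_assoc, hN _ (by omega), ih, pow_succ' b t, mul_assoc]
  have hmem : N + 1 ∈ {c : ℕ | 0 < c ∧ ∀ t : ℕ, 0 < t →
      ordg g (b ^ (c + t)) = b ^ t * ordg g (b ^ c)} := ⟨N.succ_pos, fun t _ => hpow t⟩
  exact Nat.sInf_mem ⟨_, hmem⟩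

theorem ordg_pow_add_of_cg_le (hg : 2 ≤ g) (hb : b ≠ 0) (hgb : g.Coprime b) {k : ℕ}
    (hk : cg g b ≤ k) (t : ℕ) : ordg g (b ^ (k + t)) = b ^ t * ordg g (b ^ k) := by
  obtain ⟨-, hc⟩ := cg_spec hg hb hgb
  have hc' : ∀ s, ordg g (b ^ (cg g b + s)) = b ^ s * ordg g (b ^ cg g b) := fun s => by
    rcases Nat.eq_zero_or_pos s with rfl | hs
    · simp
    · exact hc s hs
  obtain ⟨j, rfl⟩ := Nat.exists_eq_add_of_le hk
  rw [add_assoc, hc', hc', pow_add, mul_assoc, mul_left_comm]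

end Growth

theorem mod_mul_eq_add_mul_iff {x y M q n : ℕ} (hM : 0 < M) (hxy : x ≡ y [MOD M]) :
    x % (M * q) = y % M + n * M ↔ n = x / M % q := by
  rw [Nat.mod_mul, show x % M = y % M from hxy, add_right_inj, mul_comm,
    Nat.mul_right_cancel_iff hM, eq_comm]

theorem existsUnique_lt_of_injOn {f : ℕ → ℕ} {q n : ℕ} (hf : ∀ m < q, f m < q)
    (hinj : Set.InjOn f (Set.Iio q)) (hn : n < q) : ∃! m, m < q ∧ f m = n := by
  obtain ⟨m, hm, rfl⟩ := (((Set.finite_Iio q).injOn_iff_bijOn_of_mapsTo hf).1 hinj).surjOn hn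
  exact ⟨m, ⟨hm, rfl⟩, fun m' hm' => hinj hm'.1 hm hm'.2⟩

theorem injOn_div_mod_of_ordg_mul {a g M q : ℕ} (hM : M ≠ 0) (ha : a.Coprime (M * q))
    (hg : g.Coprime (M * q)) (hord : ordg g (M * q) = q * ordg g M) (i : ℕ) :
    Set.InjOn (fun m => a * g ^ (i + m * ordg g M) / M % q) (Set.Iio q) := by
  intro m₁ hm₁ m₂ hm₂ h
  have hq : q ≠ 0 := by simp only [Set.mem_Iio] at hm₁; omega
  have hmod : a * g ^ (i + m₁ * ordg g M) ≡ a * g ^ (i + m₂ * ordg g M) [MOD M * q] := by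
    simp only at h
    rw [Nat.ModEq, Nat.mod_mul, Nat.mod_mul, h,
      (mul_pow_add_mul_ordg_modEq a i m₁).trans (mul_pow_add_mul_ordg_modEq a i m₂).symm]
  have hexp := (pow_modEq_pow_iff (mul_ne_zero hM hq) hg).1 (hmod.cancel_left_of_coprime ha.symm)
  rw [hord] at hexp
  exact (Nat.ModEq.mul_right_cancel' (ordg_pos hM (Nat.Coprime.coprime_mul_right_right hg)).ne'
    (hexp.add_left_cancel' i)).eq_of_lt_of_lt hm₁ hm₂

theorem remainders_t_levels_general (g b a k t : ℕ) (hg : 2 ≤ g) (hb : 1 < b)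
    (hbg : Nat.gcd b g = 1) (hab : Nat.gcd a b = 1) (hk : cg g b ≤ k) :
    ∀ i : ℕ, i < ordg g (b ^ k) →
      (∀ m : ℕ, m < b ^ t → ∃! n : ℕ, n < b ^ t ∧
        a * g ^ (i + m * ordg g (b ^ k)) % b ^ (k + t) = a * g ^ i % b ^ k + n * b ^ k) ∧
      (∀ n : ℕ, n < b ^ t → ∃! m : ℕ, m < b ^ t ∧
        a * g ^ (i + m * ordg g (b ^ k)) % b ^ (k + t) = a * g ^ i % b ^ k + n * b ^ k) := by
  intro i _
  have hM : b ^ k ≠ 0 := pow_ne_zero _ (by omega)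
  have hq : 0 < b ^ t := by positivity
  have hord := ordg_pow_add_of_cg_le hg (by omega) (Nat.Coprime.symm hbg) hk t
  rw [pow_add] at hord ⊢
  have heq : ∀ m n, a * g ^ (i + m * ordg g (b ^ k)) % (b ^ k * b ^ t) =
      a * g ^ i % b ^ k + n * b ^ k ↔ n = a * g ^ (i + m * ordg g (b ^ k)) / b ^ k % b ^ t :=
    fun m n => mod_mul_eq_add_mul_iff (Nat.pos_of_ne_zero hM) (mul_pow_add_mul_ordg_modEq a i m)
  simp only [heq]
  refine ⟨fun m _ => ⟨_, ⟨Nat.mod_lt _ hq, rfl⟩, fun n hn => hn.2⟩, fun n hn => ?_⟩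
  simp only [eq_comm (a := n)]
  have hcop : ∀ x, Nat.Coprime x b → Nat.Coprime x (b ^ k * b ^ t) := fun x hx =>
    (hx.pow_right k).mul_right (hx.pow_right t)
  exact existsUnique_lt_of_injOn (fun m _ => Nat.mod_lt _ hq)
    (injOn_div_mod_of_ordg_mul hM (hcop a hab) (hcop g (Nat.Coprime.symm hbg)) hord i) hn

/-- For `t ≥ 1` and `k ≥ c_g(b)`, every remainder of `a/b^{k+t}` has the
unique form `(a·g^{i+m·ord_g(b^k)}) mod b^{k+t} = ((a·g^i) mod b^k) + n·b^k` with
`m, n ∈ {0,…,b^t−1}`; moreover, for each fixed `i` the resulting correspondence `m ↦ n`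
is a bijection of `{0,…,b^t−1}` onto itself. -/
theorem remainders_t_levels (g b a k t : ℕ) (hg : 2 ≤ g) (hb : 1 < b)
    (hbg : Nat.gcd b g = 1) (ha : 0 < a) (hab : Nat.gcd a b = 1) (hak : a < b ^ k)
    (ht : 1 ≤ t) (hk : cg g b ≤ k) :
    ∀ i : ℕ, i < ordg g (b ^ k) →
      (∀ m : ℕ, m < b ^ t → ∃! n : ℕ, n < b ^ t ∧
        a * g ^ (i + m * ordg g (b ^ k)) % b ^ (k + t) = a * g ^ i % b ^ k + n * b ^ k) ∧
      (∀ n : ℕ, n < b ^ t → ∃! m : ℕ, m < b ^ t ∧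
        a * g ^ (i + m * ordg g (b ^ k)) % b ^ (k + t) = a * g ^ i % b ^ k + n * b ^ k) :=
  remainders_t_levels_general g b a k t hg hb hbg hab hk
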